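/- Let G be a finite abelian group, let A ⊆ G be nonempty of density α = |A|/|G|, let δ > 0, and let m ≥ 1 be an integer. Then E_{2m}(Spec_δ(A)) ≥ α·δ^{2m}·|Spec_δ(A)|^{2m}. -/

import Mathlib

/-!
Choose phases `|c_ξ| ≤ 1` with `c_ξ 1̂_A(ξ) = |1̂_A(ξ)|` and put `f(x) = ∑_{ξ ∈ Δ} c_ξ conj (ξ x)`
for `Δ = Spec_δ(A)`. Summing the defining inequality of the spectrum over `Δ` gives
`δ |A| |Δ| ≤ |G| ∑_{ξ ∈ Δ} |1̂_A(ξ)| = |∑_{x ∈ A} f(x)| ≤ ∑_{x ∈ A} |f(x)|`, and Hölder turns this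
into `|A| (δ |A| |Δ|)^{2m} ≤ |A|^{2m} ∑_{x ∈ G} |f(x)|^{2m}`. Expanding `f^m` as a sum over `Δ^m`,
orthogonality of characters bounds `∑_x |f(x)|^{2m}` by `|G|` times the number of pairs of
`m`-tuples with equal sums, i.e. by `|G| E_{2m}(Δ)`.
-/

/-- The Fourier coefficient `1̂_A(ξ) = 𝔼_{x ∈ G} 1_A(x) conj(ξ(x))` of the indicator of a
finset `A` of a finite abelian group `G` at a character `ξ`. -/
noncomputable def indFourierCoeff {G : Type*} [AddCommGroup G] [Fintype G]
    (A : Finset G) (ξ : AddChar G ℂ) : ℂ :=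
  (Fintype.card G : ℂ)⁻¹ * ∑ x ∈ A, starRingEnd ℂ (ξ x)

/-- The `δ`-large spectrum `Spec_δ(A) = {ξ ∈ Ĝ : |1̂_A(ξ)| ≥ δα}` of a set `A ⊆ G` of
density `α`. -/
noncomputable def largeSpec {G : Type*} [AddCommGroup G] [Fintype G]
    (A : Finset G) (δ : ℝ) : Set (AddChar G ℂ) :=
  {ξ | δ * ((A.card : ℝ) / Fintype.card G) ≤ ‖indFourierCoeff A ξ‖}

/-- `E_{2m}(Δ)`: the number of `2m`-tuples `(a_1,…,a_m,a'_1,…,a'_m) ∈ Δ^{2m}` with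
`a_1 + ⋯ + a_m = a'_1 + ⋯ + a'_m` (in the dual group, addition of characters is
pointwise multiplication). -/
noncomputable def energy2m {G : Type*} [AddCommGroup G]
    (Δ : Set (AddChar G ℂ)) (m : ℕ) : ℕ :=
  Nat.card {p : (Fin m → AddChar G ℂ) × (Fin m → AddChar G ℂ) //
    (∀ i, p.1 i ∈ Δ) ∧ (∀ i, p.2 i ∈ Δ) ∧ (∏ i, p.1 i) = (∏ i, p.2 i)}

open Finset
open scoped ComplexConjugate

lemma Finset.card_mul_pow_sum_le_card_pow_mul_sum_pow {ι α : Type*} [Semiring α] [LinearOrder α]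
    [IsStrictOrderedRing α] [ExistsAddOfLE α] {s : Finset ι} {f : ι → α}
    (hf : ∀ i ∈ s, 0 ≤ f i) : ∀ n, #s * (∑ i ∈ s, f i) ^ n ≤ (#s : α) ^ n * ∑ i ∈ s, f i ^ n
  | 0 => by simp
  | n + 1 =>
    calc (#s : α) * (∑ i ∈ s, f i) ^ (n + 1)
        ≤ #s * (#s ^ n * ∑ i ∈ s, f i ^ (n + 1)) := by
          gcongr; exact pow_sum_le_card_mul_sum_pow hf n
      _ = #s ^ (n + 1) * ∑ i ∈ s, f i ^ (n + 1) := by rw [← mul_assoc, ← pow_succ']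

lemma Complex.exists_norm_le_one_mul_eq_norm (z : ℂ) : ∃ c : ℂ, ‖c‖ ≤ 1 ∧ c * z = ‖z‖ := by
  refine ⟨exp (↑(-arg z) * I), (norm_exp_ofReal_mul_I _).le, ?_⟩
  calc exp (↑(-arg z) * I) * z = exp (↑(-arg z) * I) * (‖z‖ * exp (arg z * I)) := by
        rw [norm_mul_exp_arg_mul_I]
    _ = ‖z‖ := by
        rw [mul_left_comm, ← exp_add, ofReal_neg, neg_mul, neg_add_cancel, exp_zero, mul_one]

namespace AddChar

variable {G : Type*} [AddCommGroup G]

lemma sum_mul_conj_pow (Δ : Finset (AddChar G ℂ)) (c : AddChar G ℂ → ℂ) (m : ℕ) (x : G) :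
    (∑ ξ ∈ Δ, c ξ * conj (ξ x)) ^ m =
      ∑ p ∈ Fintype.piFinset fun _ : Fin m => Δ, (∏ i, c (p i)) * conj ((∏ i, p i) x) := by
  rw [← Fin.prod_const, prod_univ_sum]
  refine sum_congr rfl fun p _ => ?_
  rw [prod_mul_distrib, prod_apply, map_prod]

variable [Fintype G]

lemma sum_conj_mul_eq_ite (ψ φ : AddChar G ℂ) [Decidable (ψ = φ)] :
    ∑ x, conj (ψ x) * φ x = if ψ = φ then (Fintype.card G : ℂ) else 0 := by
  have h : ∀ x, conj (ψ x) * φ x = (ψ⁻¹ * φ) x := fun x => by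
    rw [mul_apply, inv_apply', inv_apply_eq_conj]
  simp_rw [h, sum_eq_ite, ← one_eq_zero, inv_mul_eq_one]

lemma sum_norm_sum_mul_conj_sq_le {ι : Type*} (s : Finset ι) (φ : ι → AddChar G ℂ) (C : ι → ℂ)
    (hC : ∀ i ∈ s, ‖C i‖ ≤ 1) :
    ∑ x, ‖∑ i ∈ s, C i * conj (φ i x)‖ ^ 2 ≤
      Fintype.card G * #{ij ∈ s ×ˢ s | φ ij.1 = φ ij.2} := by
  have expand : ((∑ x, ‖∑ i ∈ s, C i * conj (φ i x)‖ ^ 2 : ℝ) : ℂ) =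
      ∑ ij ∈ s ×ˢ s, C ij.1 * conj (C ij.2) *
        if φ ij.1 = φ ij.2 then (Fintype.card G : ℂ) else 0 := by
    push_cast
    calc ∑ x, (‖∑ i ∈ s, C i * conj (φ i x)‖ : ℂ) ^ 2
        = ∑ x, ∑ ij ∈ s ×ˢ s, C ij.1 * conj (C ij.2) * (conj (φ ij.1 x) * φ ij.2 x) := by
          refine sum_congr rfl fun x _ => ?_
          rw [← Complex.mul_conj', map_sum, sum_mul_sum, ← sum_product']
          refine sum_congr rfl fun ij _ => ?_
          rw [map_mul, Complex.conj_conj]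
          ring
      _ = ∑ ij ∈ s ×ˢ s, C ij.1 * conj (C ij.2) * ∑ x, conj (φ ij.1 x) * φ ij.2 x := by
          rw [sum_comm]; simp_rw [mul_sum]
      _ = _ := by simp_rw [sum_conj_mul_eq_ite]
  have hsum_nonneg : 0 ≤ ∑ x, ‖∑ i ∈ s, C i * conj (φ i x)‖ ^ 2 := by positivity
  calc ∑ x, ‖∑ i ∈ s, C i * conj (φ i x)‖ ^ 2
      = ‖((∑ x, ‖∑ i ∈ s, C i * conj (φ i x)‖ ^ 2 : ℝ) : ℂ)‖ := by
        rw [Complex.norm_real, Real.norm_of_nonneg hsum_nonneg]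
    _ ≤ ∑ ij ∈ s ×ˢ s, if φ ij.1 = φ ij.2 then (Fintype.card G : ℝ) else 0 := by
        rw [expand]
        refine (norm_sum_le _ _).trans (sum_le_sum fun ij hij => ?_)
        obtain ⟨hi, hj⟩ := mem_product.1 hij
        rw [norm_mul, norm_mul, Complex.norm_conj]
        have hCC : ‖C ij.1‖ * ‖C ij.2‖ ≤ 1 :=
          mul_le_one₀ (hC _ hi) (norm_nonneg _) (hC _ hj)
        split_ifs <;> simp only [Complex.norm_natCast, norm_zero, mul_zero, le_refl]
        exact mul_le_of_le_one_left (by positivity) hCC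
    _ = Fintype.card G * #{ij ∈ s ×ˢ s | φ ij.1 = φ ij.2} := by
        rw [← sum_filter, sum_const, nsmul_eq_mul, mul_comm]

end AddChar

section Energy

variable {G : Type*} [AddCommGroup G] [Fintype G]

lemma energy2m_coe_finset (Δ : Finset (AddChar G ℂ)) (m : ℕ) :
    energy2m (Δ : Set (AddChar G ℂ)) m =
      #{pq ∈ (Fintype.piFinset fun _ : Fin m => Δ) ×ˢ (Fintype.piFinset fun _ : Fin m => Δ) |
        ∏ i, pq.1 i = ∏ i, pq.2 i} := by
  rw [energy2m, Nat.card_eq_fintype_card, Fintype.card_subtype]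
  congr 1
  ext pq
  simp [Fintype.mem_piFinset, and_assoc]

lemma sum_norm_sum_mul_conj_pow_le_energy2m (Δ : Finset (AddChar G ℂ)) (c : AddChar G ℂ → ℂ)
    (hc : ∀ ξ, ‖c ξ‖ ≤ 1) (m : ℕ) :
    ∑ x, ‖∑ ξ ∈ Δ, c ξ * conj (ξ x)‖ ^ (2 * m) ≤
      Fintype.card G * energy2m (Δ : Set (AddChar G ℂ)) m := by
  simp_rw [pow_mul', ← norm_pow _ m, AddChar.sum_mul_conj_pow, energy2m_coe_finset]
  refine AddChar.sum_norm_sum_mul_conj_sq_le _ (fun p : Fin m → AddChar G ℂ => ∏ i, p i) _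
    fun p _ => ?_
  rw [norm_prod]
  exact prod_le_one (fun _ _ => norm_nonneg _) fun _ _ => hc _

end Energy

section LargeSpectrum

variable {G : Type*} [AddCommGroup G] [Fintype G]

lemma sum_mul_indFourierCoeff (A : Finset G) (Δ : Finset (AddChar G ℂ)) (c : AddChar G ℂ → ℂ) :
    ∑ ξ ∈ Δ, c ξ * indFourierCoeff A ξ =
      (Fintype.card G : ℂ)⁻¹ * ∑ x ∈ A, ∑ ξ ∈ Δ, c ξ * conj (ξ x) := by
  simp_rw [indFourierCoeff, mul_sum]
  rw [sum_comm]
  exact sum_congr rfl fun _ _ => sum_congr rfl fun _ _ => mul_left_comm _ _ _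

lemma exists_mul_card_le_sum_norm_sum_mul_conj (A : Finset G) (δ : ℝ) :
    ∃ c : AddChar G ℂ → ℂ, (∀ ξ, ‖c ξ‖ ≤ 1) ∧ ∀ Δ : Finset (AddChar G ℂ),
      (∀ ξ ∈ Δ, ξ ∈ largeSpec A δ) →
        δ * #A * #Δ ≤ ∑ x ∈ A, ‖∑ ξ ∈ Δ, c ξ * conj (ξ x)‖ := by
  choose c hc hcz using fun ξ => Complex.exists_norm_le_one_mul_eq_norm (indFourierCoeff A ξ)
  refine ⟨c, hc, fun Δ hΔ => ?_⟩
  have hN : (0 : ℝ) < Fintype.card G := by exact_mod_cast Fintype.card_pos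
  calc δ * #A * #Δ = Fintype.card G * (#Δ • (δ * (#A / Fintype.card G))) := by
        rw [nsmul_eq_mul]; field_simp
    _ ≤ Fintype.card G * ∑ ξ ∈ Δ, ‖indFourierCoeff A ξ‖ := by
        gcongr; exact card_nsmul_le_sum _ _ _ hΔ
    _ = Fintype.card G * ‖∑ ξ ∈ Δ, c ξ * indFourierCoeff A ξ‖ := by
        simp_rw [hcz]
        rw [← Complex.ofReal_sum, Complex.norm_real,
          Real.norm_of_nonneg (sum_nonneg fun _ _ => norm_nonneg _)]
    _ = ‖∑ x ∈ A, ∑ ξ ∈ Δ, c ξ * conj (ξ x)‖ := by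
        rw [sum_mul_indFourierCoeff, norm_mul, norm_inv, Complex.norm_natCast,
          mul_inv_cancel_left₀ hN.ne']
    _ ≤ ∑ x ∈ A, ‖∑ ξ ∈ Δ, c ξ * conj (ξ x)‖ := norm_sum_le _ _

lemma card_mul_pow_le_card_mul_energy2m (A : Finset G) (hA : A.Nonempty) {δ : ℝ} (hδ : 0 ≤ δ)
    (Δ : Finset (AddChar G ℂ)) (hΔ : ∀ ξ ∈ Δ, ξ ∈ largeSpec A δ) (m : ℕ) :
    #A * (δ * #Δ) ^ (2 * m) ≤ Fintype.card G * energy2m (Δ : Set (AddChar G ℂ)) m := by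
  obtain ⟨c, hc, hlower⟩ := exists_mul_card_le_sum_norm_sum_mul_conj A δ
  set f : G → ℝ := fun x => ‖∑ ξ ∈ Δ, c ξ * conj (ξ x)‖
  have hApos : (0 : ℝ) < #A := by exact_mod_cast hA.card_pos
  refine le_of_mul_le_mul_left ?_ (pow_pos hApos (2 * m))
  calc (#A : ℝ) ^ (2 * m) * (#A * (δ * #Δ) ^ (2 * m))
      = #A * (δ * #A * #Δ) ^ (2 * m) := by ring
    _ ≤ #A * (∑ x ∈ A, f x) ^ (2 * m) := by
      gcongr; exact hlower Δ hΔ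
    _ ≤ #A ^ (2 * m) * ∑ x ∈ A, f x ^ (2 * m) :=
      card_mul_pow_sum_le_card_pow_mul_sum_pow (fun _ _ => norm_nonneg _) _
    _ ≤ #A ^ (2 * m) * ∑ x, f x ^ (2 * m) := by
      gcongr; exact subset_univ A
    _ ≤ #A ^ (2 * m) * (Fintype.card G * energy2m (Δ : Set (AddChar G ℂ)) m) := by
      gcongr; exact sum_norm_sum_mul_conj_pow_le_energy2m Δ c hc m

end LargeSpectrum

theorem largeSpec_energy_general {G : Type*} [AddCommGroup G] [Fintype G]
    (A : Finset G) (hA : A.Nonempty) (δ : ℝ) (hδ : 0 < δ) (m : ℕ) :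
    ((A.card : ℝ) / Fintype.card G) * δ ^ (2 * m) *
        (Nat.card (largeSpec A δ) : ℝ) ^ (2 * m) ≤
      (energy2m (largeSpec A δ) m : ℝ) := by
  classical
  set Δ := (largeSpec A δ).toFinset
  have key := card_mul_pow_le_card_mul_energy2m A hA hδ.le Δ (fun _ => Set.mem_toFinset.1) m
  rw [Set.coe_toFinset] at key
  rw [Nat.card_coe_set_eq, Set.ncard_eq_toFinset_card']
  calc (#A : ℝ) / Fintype.card G * δ ^ (2 * m) * #Δ ^ (2 * m)
      = #A * (δ * #Δ) ^ (2 * m) / Fintype.card G := by ring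
    _ ≤ Fintype.card G * energy2m (largeSpec A δ) m / Fintype.card G := by gcongr
    _ = energy2m (largeSpec A δ) m := by field_simp

/-- The large spectrum has large higher energies:
`E_{2m}(Spec_δ(A)) ≥ α δ^{2m} |Spec_δ(A)|^{2m}`. -/
theorem largeSpec_energy {G : Type*} [AddCommGroup G] [Fintype G]
    (A : Finset G) (hA : A.Nonempty) (δ : ℝ) (hδ : 0 < δ) (m : ℕ) (hm : 1 ≤ m) :
    ((A.card : ℝ) / Fintype.card G) * δ ^ (2 * m) *
        (Nat.card (largeSpec A δ) : ℝ) ^ (2 * m) ≤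
      (energy2m (largeSpec A δ) m : ℝ) :=
  largeSpec_energy_general A hA δ hδ m
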